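/- Let V be a set of variables, X ⊆ V, and c : X → {0,1}, and let T = { s : V → {0,1} | s(v) = c(v) for all v ∈ X } be the team of all assignments agreeing with c on X. Let x⃗ = (x_1,…,x_l) and y⃗ = (y_1,…,y_l) be tuples of variables from V such that y_1,…,y_l are pairwise distinct and for every i ≤ l with y_i ∈ X we have x_i ∈ X and c(x_i) = c(y_i). Then T ⊨ x⃗ ⊆ y⃗. -/
import Mathlib

/-- `T ⊨ x⃗ ⊆ y⃗` for tuples `x y : Fin l → V`: for every `t ∈ T` there is `t' ∈ T`
with `t(x⃗) = t'(y⃗)`. -/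
def incSat {V : Type*} (T : Set (V → Bool)) {l : ℕ} (x y : Fin l → V) : Prop :=
  ∀ t ∈ T, ∃ t' ∈ T, ∀ i, t (x i) = t' (y i)

/-- let `T` be the team of all assignments on `V` agreeing with `c` on
`X ⊆ V`. If `y₁, …, y_l` are pairwise distinct and for every `i` with `y i ∈ X` we have
`x i ∈ X` and `c (x i) = c (y i)`, then `T ⊨ x⃗ ⊆ y⃗`. -/
theorem full_team_sat_inc {V : Type*} (X : Set V) (c : V → Bool)
    (T : Set (V → Bool)) (hT : T = {s : V → Bool | ∀ v ∈ X, s v = c v})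
    {l : ℕ} (x y : Fin l → V) (hy : Function.Injective y)
    (h : ∀ i, y i ∈ X → x i ∈ X ∧ c (x i) = c (y i)) :
    incSat T x y := by
  subst hT
  intro t ht
  classical
  refine ⟨fun v => if hv : ∃ i, y i = v then t (x hv.choose) else c v, ?_, ?_⟩
  · intro v hv
    by_cases hex : ∃ i, y i = v
    · simp only [dif_pos hex]
      obtain ⟨hx, hc⟩ := h hex.choose (by rw [hex.choose_spec]; exact hv)
      rw [ht _ hx, hc, hex.choose_spec]
    · simp [dif_neg hex]
  · intro i
    have hex : ∃ j, y j = y i := ⟨i, rfl⟩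
    simp only [dif_pos hex]
    rw [hy hex.choose_spec]
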